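/- Let k ≥ 1 and 0 < s ≤ 1. There exists a constant A > 0, depending only on k and s, such that the following holds. Let v : B(0,3) → ℝ be a continuous plurisubharmonic function on the open ball B(0,3) ⊆ ℂ^k, and let u : B(0,3) → ℝ be a continuous function such that both v + u and v − u are plurisubharmonic. Then for every 0 < r ≤ 1/2 one has m_{B(0,1)}(u, r) ≤ 3 · m_{B(0,2)}(v, r^s) + A · (Ω_{B(0,2)}(u) + Ω_{B(0,2)}(v)) · r^{1−s}. -/

import Mathlib

open Metric

/-- A continuous function `u` on `Ω ⊆ ℂ^k` is plurisubharmonic if it satisfies the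
sub-mean value inequality on every complex line. -/
def IsPshOn {k : ℕ} (Ω : Set (EuclideanSpace ℂ (Fin k)))
    (u : EuclideanSpace ℂ (Fin k) → ℝ) : Prop :=
  ∀ (a b : EuclideanSpace ℂ (Fin k)) (z₀ : ℂ) (ρ : ℝ), 0 < ρ →
    (∀ z : ℂ, ‖z - z₀‖ ≤ ρ → a + z • b ∈ Ω) →
    u (a + z₀ • b) ≤ (1 / (2 * Real.pi)) *
      ∫ θ in (0:ℝ)..(2 * Real.pi),
        u (a + (z₀ + (ρ : ℂ) * Complex.exp ((θ : ℂ) * Complex.I)) • b)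

/-- The modulus of continuity `m_U(g, r) = sup {|g x - g y| : x, y ∈ U, dist x y ≤ r}`. -/
noncomputable def modCont {X : Type*} [PseudoMetricSpace X] (U : Set X) (g : X → ℝ)
    (r : ℝ) : ℝ :=
  sSup {t : ℝ | ∃ x ∈ U, ∃ y ∈ U, dist x y ≤ r ∧ t = |g x - g y|}

/-- The oscillation `Ω_U(g) = sup_U g - inf_U g = sup {|g x - g y| : x, y ∈ U}`. -/
noncomputable def oscOn {X : Type*} [PseudoMetricSpace X] (U : Set X) (g : X → ℝ) : ℝ :=
  sSup {t : ℝ | ∃ x ∈ U, ∃ y ∈ U, t = |g x - g y|}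

/-!
On the complex line `z ↦ x + z • b` through `x` and `y` (with `y` at `z = |x - y|`) the functions
`v ± u` are subharmonic, so `(v + u)(x)` and `(v - u)(y)` are bounded by their averages over the
discs of radius `δ` centred at `0` and at `|x - y|`. Adding the two inequalities, the averages of
`v` exceed `v(x)` and `v(y)` by at most the modulus of continuity of `v` at scale `δ`, while the
averages of `u` over two discs whose centres are `|x - y| ≤ r` apart differ by at most twice the
oscillation of `u` times the relative area `((δ + r)² - δ²) / δ² = O(r / δ)` of the annulus that
surrounds both inside the disc of radius `δ + r`. Taking `δ = r^s / 2` gives the `r^{1-s}` term.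
-/

open MeasureTheory Real Set

section SetIntegral

variable {α : Type*} [MeasurableSpace α] {μ : Measure α} {f : α → ℝ} {a W : ℝ}

theorem abs_setIntegral_sub_mul_le {s : Set α} (hs : μ s ≠ ⊤) (hf : IntegrableOn f s μ)
    (hW : ∀ z ∈ s, |f z - a| ≤ W) :
    |∫ z in s, f z ∂μ - a * μ.real s| ≤ W * μ.real s := by
  have h := norm_setIntegral_le_of_norm_le_const (f := fun z ↦ f z - a) hs.lt_top hW
  rwa [integral_sub hf (integrableOn_const hs), setIntegral_const, smul_eq_mul, mul_comm,
    Real.norm_eq_abs] at h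

theorem setIntegral_sub_setIntegral_le_of_subset {s t S : Set α} (hsS : s ⊆ S) (htS : t ⊆ S)
    (hs : MeasurableSet s) (ht : MeasurableSet t) (hst : μ s = μ t) (hS : μ S ≠ ⊤)
    (hf : IntegrableOn f S μ) (hW : ∀ z ∈ S, |f z - a| ≤ W) :
    ∫ z in s, f z ∂μ - ∫ z in t, f z ∂μ ≤ 2 * W * (μ.real S - μ.real s) := by
  have hcompl : ∀ s' ⊆ S, MeasurableSet s' →
      |∫ z in S \ s', f z ∂μ - a * (μ.real S - μ.real s')| ≤ W * (μ.real S - μ.real s') := by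
    intro s' hs'S hs'
    rw [← measureReal_sdiff hs'S hs' hS]
    exact abs_setIntegral_sub_mul_le (measure_ne_top_of_subset sdiff_subset hS)
      (hf.mono_set sdiff_subset) fun z hz ↦ hW z hz.1
  have hs' := abs_le.1 (hcompl s hsS hs)
  have ht' := abs_le.1 (hcompl t htS ht)
  rw [setIntegral_sdiff hs hf hsS] at hs'
  rw [setIntegral_sdiff ht hf htS, measureReal_def μ t, ← hst, ← measureReal_def] at ht'
  linarith [hs'.1, ht'.2]

end SetIntegral

section Oscillation

variable {X : Type*} {U : Set X} {g : X → ℝ}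

theorem bddAbove_abs_sub_of_isBounded (hg : Bornology.IsBounded (g '' U)) :
    BddAbove {t : ℝ | ∃ x ∈ U, ∃ y ∈ U, t = |g x - g y|} := by
  obtain ⟨C, hC⟩ := isBounded_iff_forall_norm_le.1 hg
  refine ⟨2 * C, ?_⟩
  rintro t ⟨x, hx, y, hy, rfl⟩
  have hgx := hC _ (mem_image_of_mem g hx)
  have hgy := hC _ (mem_image_of_mem g hy)
  rw [Real.norm_eq_abs] at hgx hgy
  linarith [abs_sub (g x) (g y)]

variable [PseudoMetricSpace X]

theorem le_oscOn {x y : X} (hg : Bornology.IsBounded (g '' U)) (hx : x ∈ U) (hy : y ∈ U) :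
    |g x - g y| ≤ oscOn U g :=
  le_csSup (bddAbove_abs_sub_of_isBounded hg) ⟨x, hx, y, hy, rfl⟩

theorem le_modCont {x y : X} {r : ℝ} (hg : Bornology.IsBounded (g '' U)) (hx : x ∈ U) (hy : y ∈ U)
    (hxy : dist x y ≤ r) : |g x - g y| ≤ modCont U g r :=
  le_csSup ((bddAbove_abs_sub_of_isBounded hg).mono <| by
    rintro _ ⟨x, hx, y, hy, -, rfl⟩
    exact ⟨x, hx, y, hy, rfl⟩) ⟨x, hx, y, hy, hxy, rfl⟩

theorem oscOn_nonneg : 0 ≤ oscOn U g :=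
  Real.sSup_nonneg fun _ ⟨_, _, _, _, ht⟩ ↦ ht ▸ abs_nonneg _

theorem modCont_nonneg {r : ℝ} : 0 ≤ modCont U g r :=
  Real.sSup_nonneg fun _ ⟨_, _, _, _, _, ht⟩ ↦ ht ▸ abs_nonneg _

theorem modCont_le {r B : ℝ} (hB : 0 ≤ B)
    (h : ∀ x ∈ U, ∀ y ∈ U, dist x y ≤ r → |g x - g y| ≤ B) : modCont U g r ≤ B :=
  Real.sSup_le (fun _ ⟨x, hx, y, hy, hxy, ht⟩ ↦ ht ▸ h x hx y hy hxy) hB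

end Oscillation

section Disc

variable {E : Type*} [NormedAddCommGroup E] [NormedSpace ℝ E]

theorem setIntegral_ball_eq_setIntegral_polarCoord (f : ℂ → E) (c : ℂ) (δ : ℝ) :
    ∫ w in ball c δ, f w = ∫ p in Ioo 0 δ ×ˢ Ioo (-π) π, p.1 • f (circleMap c p.1 p.2) := by
  have hpolar : ∀ p : ℝ × ℝ, c + Complex.polarCoord.symm p = circleMap c p.1 p.2 := by
    intro p
    rw [Complex.polarCoord_symm_apply, circleMap, Complex.exp_mul_I]
    push_cast
    ring
  have hmem : ∀ p : ℝ × ℝ,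
      Complex.polarCoord.symm p ∈ ball 0 δ ↔ p ∈ Ioo (-δ) δ ×ˢ (univ : Set ℝ) := by
    intro p
    simp [abs_lt]
  have htarget : polarCoord.target ∩ Ioo (-δ) δ ×ˢ univ = Ioo 0 δ ×ˢ Ioo (-π) π := by
    ext ⟨ρ, θ⟩
    simp only [polarCoord_target, mem_inter_iff, mem_prod, mem_Ioi, mem_Ioo, mem_univ, and_true]
    constructor
    · rintro ⟨⟨hρ, hθ⟩, -, hρδ⟩
      exact ⟨⟨hρ, hρδ⟩, hθ⟩
    · rintro ⟨⟨hρ, hρδ⟩, hθ⟩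
      exact ⟨⟨hρ, hθ⟩, by linarith, hρδ⟩
  calc ∫ w in ball c δ, f w = ∫ w, (ball c δ).indicator f (c + w) := by
        rw [integral_add_left_eq_self, integral_indicator measurableSet_ball]
    _ = ∫ w, (ball 0 δ).indicator (fun w ↦ f (c + w)) w := by
        congr 1 with w
        simp only [indicator, mem_ball, dist_self_add_left, dist_zero_right]
    _ = ∫ p in polarCoord.target, p.1 • (ball 0 δ).indicator (fun w ↦ f (c + w))
          (Complex.polarCoord.symm p) := (Complex.integral_comp_polarCoord_symm _).symm
    _ = ∫ p in polarCoord.target, (Ioo (-δ) δ ×ˢ univ).indicator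
          (fun p ↦ p.1 • f (circleMap c p.1 p.2)) p := by
        congr 1 with p
        by_cases hp : Complex.polarCoord.symm p ∈ ball 0 δ
        · rw [indicator_of_mem hp, indicator_of_mem ((hmem p).1 hp), hpolar]
        · rw [indicator_of_notMem hp, indicator_of_notMem (mt (hmem p).2 hp), smul_zero]
    _ = _ := by
        rw [setIntegral_indicator (measurableSet_Ioo.prod MeasurableSet.univ), htarget]

theorem intervalIntegral_neg_pi_pi_eq_circleAverage (f : ℂ → E) (c : ℂ) (ρ : ℝ) :
    ∫ θ in -π..π, f (circleMap c ρ θ) = (2 * π) • circleAverage f c ρ := by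
  rw [circleAverage_eq_integral_add (-π), smul_inv_smul₀ two_pi_pos.ne',
    intervalIntegral.integral_comp_add_right (fun θ ↦ f (circleMap c ρ θ))]
  ring_nf

theorem setIntegral_ball_eq_integral_circleAverage {f : ℂ → E} {c : ℂ} {δ : ℝ}
    (hf : ContinuousOn f (closedBall c δ)) :
    ∫ w in ball c δ, f w = ∫ ρ in Ioo 0 δ, (2 * π * ρ) • circleAverage f c ρ := by
  have hint : IntegrableOn (fun p : ℝ × ℝ ↦ p.1 • f (circleMap c p.1 p.2))
      (Icc 0 δ ×ˢ Icc (-π) π) := by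
    refine ContinuousOn.integrableOn_compact (isCompact_Icc.prod isCompact_Icc) ?_
    refine continuous_fst.continuousOn.smul (hf.comp circleMap.continuous.continuousOn ?_)
    rintro ⟨ρ, θ⟩ ⟨hρ, -⟩
    exact closedBall_subset_closedBall hρ.2 (circleMap_mem_closedBall c hρ.1 θ)
  rw [setIntegral_ball_eq_setIntegral_polarCoord, Measure.volume_eq_prod,
    setIntegral_prod _ ((hint.mono_set (prod_mono Ioo_subset_Icc_self Ioo_subset_Icc_self)))]
  refine setIntegral_congr_fun measurableSet_Ioo fun ρ _ ↦ ?_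
  rw [integral_smul, ← integral_Ioc_eq_integral_Ioo,
    ← intervalIntegral.integral_of_le (by linarith [pi_pos]),
    intervalIntegral_neg_pi_pi_eq_circleAverage, smul_smul, mul_comm ρ]

end Disc

theorem mul_le_setIntegral_ball_of_le_circleAverage {f : ℂ → ℝ} {c : ℂ} {δ : ℝ} (hδ : 0 ≤ δ)
    (hf : ContinuousOn f (closedBall c δ)) (h : ∀ ρ ∈ Ioo 0 δ, f c ≤ circleAverage f c ρ) :
    π * δ ^ 2 * f c ≤ ∫ w in ball c δ, f w := by
  have hcont : ContinuousOn (fun ρ ↦ (2 * π * ρ) • circleAverage f c ρ) (Icc 0 δ) := by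
    refine (continuousOn_const.mul continuousOn_id).smul
      (ContinuousOn.circleAverage (hf.mono fun z hz ↦ ?_) fun ρ hρ ↦ hρ.1)
    simpa [dist_eq_norm] using hz.2
  have hmean : ∫ ρ in Ioo 0 δ, (2 * π * ρ) • f c = π * δ ^ 2 * f c := by
    rw [integral_smul_const, integral_const_mul, ← integral_Ioc_eq_integral_Ioo,
      ← intervalIntegral.integral_of_le hδ, integral_id, smul_eq_mul]
    ring
  rw [setIntegral_ball_eq_integral_circleAverage hf, ← hmean]
  refine setIntegral_mono_on
    ((Continuous.integrableOn_Icc (by fun_prop)).mono_set Ioo_subset_Icc_self)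
    (hcont.integrableOn_Icc.mono_set Ioo_subset_Icc_self) measurableSet_Ioo fun ρ hρ ↦ ?_
  exact smul_le_smul_of_nonneg_left (h ρ hρ) (by have := hρ.1; positivity)

theorem Complex.measureReal_ball (c : ℂ) {r : ℝ} (hr : 0 ≤ r) :
    volume.real (ball c r) = π * r ^ 2 := by
  simp [measureReal_def, Complex.volume_ball, ENNReal.toReal_ofReal hr, mul_comm]

theorem sub_le_of_mul_le_setIntegral_ball {f g : ℂ → ℝ} {z₁ z₂ : ℂ} {δ M W : ℝ} (hδ : 0 < δ)
    (hf : ContinuousOn f (closedBall z₁ (δ + dist z₁ z₂)))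
    (hg : ContinuousOn g (closedBall z₁ (δ + dist z₁ z₂)))
    (hadd : π * δ ^ 2 * (g z₁ + f z₁) ≤ ∫ z in ball z₁ δ, (g z + f z))
    (hsub : π * δ ^ 2 * (g z₂ - f z₂) ≤ ∫ z in ball z₂ δ, (g z - f z))
    (hM : ∀ z ∈ closedBall z₁ (δ + dist z₁ z₂), ∀ w ∈ closedBall z₁ (δ + dist z₁ z₂),
      dist z w ≤ δ → |g z - g w| ≤ M)
    (hW : ∀ z ∈ closedBall z₁ (δ + dist z₁ z₂), |f z - f z₁| ≤ W) :
    f z₁ - f z₂ ≤ 2 * M + 2 * W * ((δ + dist z₁ z₂) ^ 2 - δ ^ 2) / δ ^ 2 := by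
  set R := δ + dist z₁ z₂ with hR
  have hRδ : δ ≤ R := le_add_of_nonneg_right dist_nonneg
  have hsub₁ : closedBall z₁ δ ⊆ closedBall z₁ R := closedBall_subset_closedBall hRδ
  have hsub₂ : closedBall z₂ δ ⊆ closedBall z₁ R :=
    closedBall_subset_closedBall' (by rw [hR, dist_comm])
  have hint : ∀ h : ℂ → ℝ, ContinuousOn h (closedBall z₁ R) →
      ∀ s ⊆ closedBall z₁ R, IntegrableOn h s := fun h hh s hs ↦
    (hh.integrableOn_compact (isCompact_closedBall _ _)).mono_set hs
  rw [integral_add (hint g hg _ (ball_subset_closedBall.trans hsub₁))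
    (hint f hf _ (ball_subset_closedBall.trans hsub₁))] at hadd
  rw [integral_sub (hint g hg _ (ball_subset_closedBall.trans hsub₂))
    (hint f hf _ (ball_subset_closedBall.trans hsub₂))] at hsub
  have hgball : ∀ z₀, closedBall z₀ δ ⊆ closedBall z₁ R →
      ∫ z in ball z₀ δ, g z ≤ π * δ ^ 2 * (g z₀ + M) := by
    intro z₀ hz₀
    calc ∫ z in ball z₀ δ, g z ≤ ∫ _ in ball z₀ δ, (g z₀ + M) := by
          refine setIntegral_mono_on (hint g hg _ (ball_subset_closedBall.trans hz₀))
            (integrableOn_const measure_ball_lt_top.ne) measurableSet_ball fun z hz ↦ ?_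
          have := hM z (hz₀ (ball_subset_closedBall hz)) z₀ (hz₀ (mem_closedBall_self hδ.le))
            (le_of_lt hz)
          linarith [le_abs_self (g z - g z₀)]
      _ = π * δ ^ 2 * (g z₀ + M) := by
          rw [setIntegral_const, Complex.measureReal_ball _ hδ.le, smul_eq_mul]
  have hf₁₂ := setIntegral_sub_setIntegral_le_of_subset (S := ball z₁ R)
    (ball_subset_ball hRδ) (ball_subset_ball' (by rw [hR, dist_comm])) measurableSet_ball
    measurableSet_ball (by simp only [Complex.volume_ball]) measure_ball_lt_top.ne
    (hint f hf _ ball_subset_closedBall) fun z hz ↦ hW z (ball_subset_closedBall hz)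
  rw [Complex.measureReal_ball _ (hδ.le.trans hRδ), Complex.measureReal_ball _ hδ.le] at hf₁₂
  have hmain : π * (δ ^ 2 * (f z₁ - f z₂ - 2 * M)) ≤ π * (2 * W * (R ^ 2 - δ ^ 2)) := by
    linarith [hgball z₁ hsub₁, hgball z₂ hsub₂]
  rw [← sub_le_iff_le_add', le_div_iff₀ (by positivity)]
  linarith [le_of_mul_le_mul_left hmain pi_pos]

/-- Allowing `‖b‖ ≤ 1` rather than a unit vector avoids a case split on `x = y` in the
complex-line argument. -/
theorem exists_norm_le_one_add_dist_smul_eq {E : Type*} [NormedAddCommGroup E]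
    [NormedSpace ℂ E] (x y : E) : ∃ b : E, ‖b‖ ≤ 1 ∧ x + (dist x y : ℂ) • b = y := by
  rcases eq_or_ne x y with rfl | hxy
  · exact ⟨0, by simp⟩
  have hd : (dist x y : ℂ) ≠ 0 := by simpa using hxy
  refine ⟨(dist x y : ℂ)⁻¹ • (y - x), ?_, ?_⟩
  · rw [norm_smul, norm_inv, Complex.norm_real, Real.norm_eq_abs, abs_dist, dist_eq_norm',
      inv_mul_cancel₀ (by simpa [sub_eq_zero] using hxy.symm)]
  · rw [smul_inv_smul₀ hd, add_sub_cancel]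

namespace IsPshOn

variable {k : ℕ} {Ω Ω' : Set (EuclideanSpace ℂ (Fin k))} {u : EuclideanSpace ℂ (Fin k) → ℝ}
  {a b : EuclideanSpace ℂ (Fin k)} {z₀ : ℂ}

theorem mono (h : IsPshOn Ω u) (hΩ : Ω' ⊆ Ω) : IsPshOn Ω' u :=
  fun a b z₀ ρ hρ hdisc ↦ h a b z₀ ρ hρ fun z hz ↦ hΩ (hdisc z hz)

theorem le_circleAverage (h : IsPshOn Ω u) {ρ : ℝ} (hρ : 0 < ρ)
    (hdisc : ∀ z ∈ closedBall z₀ ρ, a + z • b ∈ Ω) :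
    u (a + z₀ • b) ≤ circleAverage (fun z ↦ u (a + z • b)) z₀ ρ := by
  rw [circleAverage_def, smul_eq_mul, inv_eq_one_div]
  exact h a b z₀ ρ hρ fun z hz ↦ hdisc z (by rwa [mem_closedBall, dist_eq_norm])

theorem mul_le_setIntegral_ball (h : IsPshOn Ω u) (hu : ContinuousOn u Ω) {δ : ℝ} (hδ : 0 ≤ δ)
    (hdisc : ∀ z ∈ closedBall z₀ δ, a + z • b ∈ Ω) :
    π * δ ^ 2 * u (a + z₀ • b) ≤ ∫ z in ball z₀ δ, u (a + z • b) :=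
  mul_le_setIntegral_ball_of_le_circleAverage hδ
    (hu.comp (by fun_prop) hdisc) fun ρ hρ ↦
      h.le_circleAverage hρ.1 fun z hz ↦
        hdisc z (closedBall_subset_closedBall hρ.2.le hz)

end IsPshOn

theorem sub_le_of_isPshOn_add_of_isPshOn_sub {k : ℕ} {Ω : Set (EuclideanSpace ℂ (Fin k))}
    {u v : EuclideanSpace ℂ (Fin k) → ℝ} {x y : EuclideanSpace ℂ (Fin k)} {δ M W : ℝ}
    (hu : ContinuousOn u Ω) (hv : ContinuousOn v Ω)
    (hadd : IsPshOn Ω (v + u)) (hsub : IsPshOn Ω (v - u)) (hδ : 0 < δ)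
    (hΩ : closedBall x (δ + dist x y) ⊆ Ω)
    (hM : ∀ p ∈ Ω, ∀ q ∈ Ω, dist p q ≤ δ → |v p - v q| ≤ M)
    (hW : ∀ p ∈ Ω, |u p - u x| ≤ W) :
    u x - u y ≤ 2 * M + 2 * W * ((δ + dist x y) ^ 2 - δ ^ 2) / δ ^ 2 := by
  obtain ⟨b, hb, hby⟩ := exists_norm_le_one_add_dist_smul_eq x y
  have hd : dist (0 : ℂ) (dist x y : ℂ) = dist x y := by simp
  have hLdist : ∀ z w : ℂ, dist (x + z • b) (x + w • b) ≤ dist z w := fun z w ↦ by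
    rw [dist_eq_norm, dist_eq_norm, add_sub_add_left_eq_sub, ← sub_smul, norm_smul]
    exact mul_le_of_le_one_right (norm_nonneg _) hb
  have hLmem : ∀ z ∈ closedBall (0 : ℂ) (δ + dist 0 (dist x y : ℂ)), x + z • b ∈ Ω :=
    fun z hz ↦ hΩ (by simpa [hd] using (hLdist z 0).trans hz)
  have key := sub_le_of_mul_le_setIntegral_ball (z₁ := 0) (z₂ := dist x y)
    (f := fun z ↦ u (x + z • b)) (g := fun z ↦ v (x + z • b)) hδ
    (hu.comp (by fun_prop) hLmem) (hv.comp (by fun_prop) hLmem)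
    (hadd.mul_le_setIntegral_ball (hv.add hu) hδ.le fun z hz ↦ hLmem z
      (closedBall_subset_closedBall (le_add_of_nonneg_right dist_nonneg) hz))
    (hsub.mul_le_setIntegral_ball (hv.sub hu) hδ.le fun z hz ↦ hLmem z
      (closedBall_subset_closedBall' (by rw [dist_comm]) hz))
    (fun z hz w hw hzw ↦ hM _ (hLmem z hz) _ (hLmem w hw) ((hLdist z w).trans hzw))
    fun z hz ↦ by simpa using hW _ (hLmem z hz)
  simp only [zero_smul, add_zero, hby, hd] at key
  exact key

theorem modCont_ball_one_le {k : ℕ} {u v : EuclideanSpace ℂ (Fin k) → ℝ}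
    (hu : ContinuousOn u (ball 0 3)) (hv : ContinuousOn v (ball 0 3))
    (hadd : IsPshOn (ball 0 3) (v + u)) (hsub : IsPshOn (ball 0 3) (v - u)) {r δ t : ℝ}
    (hr : 0 ≤ r) (hδ : 0 < δ) (hrδ : r ≤ 2 * δ) (hδr : δ + r ≤ 1) (hδt : δ ≤ t) :
    modCont (ball 0 1) u r ≤ 2 * modCont (ball 0 2) v t + 8 * oscOn (ball 0 2) u * (r / δ) := by
  have h23 : ball (0 : EuclideanSpace ℂ (Fin k)) 2 ⊆ ball 0 3 := ball_subset_ball (by norm_num)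
  have hbdd : ∀ g : EuclideanSpace ℂ (Fin k) → ℝ, ContinuousOn g (ball 0 3) →
      Bornology.IsBounded (g '' ball 0 2) := fun g hg ↦
    ((isCompact_closedBall 0 2).image_of_continuousOn
      (hg.mono (closedBall_subset_ball (by norm_num)))).isBounded.subset
      (image_mono ball_subset_closedBall)
  have hpair : ∀ x ∈ ball (0 : EuclideanSpace ℂ (Fin k)) 1, ∀ y ∈ ball 0 1, dist x y ≤ r →
      u x - u y ≤ 2 * modCont (ball 0 2) v t + 8 * oscOn (ball 0 2) u * (r / δ) := by
    intro x hx y hy hxy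
    have hΩ : closedBall x (δ + dist x y) ⊆ ball 0 2 :=
      closedBall_subset_ball' (by rw [mem_ball] at hx; linarith)
    have harea : ((δ + dist x y) ^ 2 - δ ^ 2) / δ ^ 2 ≤ 4 * (r / δ) := by
      rw [div_le_iff₀ (by positivity), show 4 * (r / δ) * δ ^ 2 = 4 * r * δ by field_simp]
      nlinarith [dist_nonneg (x := x) (y := y)]
    calc u x - u y ≤ 2 * modCont (ball 0 2) v t
          + 2 * oscOn (ball 0 2) u * (((δ + dist x y) ^ 2 - δ ^ 2) / δ ^ 2) := by
          rw [← mul_div_assoc]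
          exact sub_le_of_isPshOn_add_of_isPshOn_sub (hu.mono h23) (hv.mono h23)
            (hadd.mono h23) (hsub.mono h23) hδ hΩ
            (fun p hp q hq hpq ↦ le_modCont (hbdd v hv) hp hq (hpq.trans hδt))
            fun p hp ↦ le_oscOn (hbdd u hu) hp (ball_subset_ball one_le_two hx)
      _ ≤ 2 * modCont (ball 0 2) v t + 8 * oscOn (ball 0 2) u * (r / δ) := by
          have hW : 0 ≤ oscOn (ball 0 2) u := oscOn_nonneg
          nlinarith
  have hM : 0 ≤ modCont (ball 0 2) v t := modCont_nonneg
  have hW : 0 ≤ oscOn (ball 0 2) u := oscOn_nonneg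
  exact modCont_le (by positivity) fun x hx y hy hxy ↦
    abs_sub_le_iff.2 ⟨hpair x hx y hy hxy, hpair y hy x hx (by rwa [dist_comm])⟩

theorem stmt_3_general (k : ℕ) (s : ℝ) (hs0 : 0 < s) (hs1 : s ≤ 1) :
    ∃ A : ℝ, 0 < A ∧
      ∀ u v : EuclideanSpace ℂ (Fin k) → ℝ,
        ContinuousOn u (ball 0 3) → ContinuousOn v (ball 0 3) →
        IsPshOn (ball 0 3) v →
        IsPshOn (ball 0 3) (v + u) → IsPshOn (ball 0 3) (v - u) →
        ∀ r : ℝ, 0 < r → r ≤ 1 / 2 →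
          modCont (ball 0 1) u r ≤
            3 * modCont (ball 0 2) v (r ^ s) +
              A * (oscOn (ball 0 2) u + oscOn (ball 0 2) v) * r ^ (1 - s) := by
  refine ⟨16, by norm_num, fun u v hu hv _ hadd hsub r hr0 hr ↦ ?_⟩
  have hr1 : r ≤ 1 := by linarith
  have hrs : r ≤ r ^ s := by simpa using rpow_le_rpow_of_exponent_ge hr0 hr1 hs1
  have hrs1 : r ^ s ≤ 1 := rpow_le_one hr0.le hr1 hs0.le
  have hδ : 0 < r ^ s / 2 := by positivity
  have hratio : r / (r ^ s / 2) = 2 * r ^ (1 - s) := by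
    rw [rpow_sub hr0, rpow_one]
    field_simp
  have key := modCont_ball_one_le hu hv hadd hsub hr0.le hδ (by linarith) (by linarith)
    (half_le_self (rpow_nonneg hr0.le s))
  rw [hratio] at key
  have hM : 0 ≤ modCont (ball 0 2) v (r ^ s) := modCont_nonneg
  have hWv : 0 ≤ oscOn (ball 0 2) v := oscOn_nonneg
  nlinarith [rpow_nonneg hr0.le (1 - s)]

/-- Corollary 2.8 of the paper. Let `v` be continuous plurisubharmonic on
`B(0,3) ⊆ ℂ^k` and `u` continuous with `v + u` and `v - u` plurisubharmonic (encoding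
`|dd^c u| ≤ dd^c v`). Then for `0 < s ≤ 1` there is `A = A(k,s) > 0` such that for
`0 < r ≤ 1/2`:
`m_{B(0,1)}(u, r) ≤ 3 m_{B(0,2)}(v, r^s) + A (Ω_{B(0,2)}(u) + Ω_{B(0,2)}(v)) r^{1-s}`. -/
theorem stmt_3 (k : ℕ) (hk : 1 ≤ k) (s : ℝ) (hs0 : 0 < s) (hs1 : s ≤ 1) :
    ∃ A : ℝ, 0 < A ∧
      ∀ u v : EuclideanSpace ℂ (Fin k) → ℝ,
        ContinuousOn u (ball 0 3) → ContinuousOn v (ball 0 3) →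
        IsPshOn (ball 0 3) v →
        IsPshOn (ball 0 3) (v + u) → IsPshOn (ball 0 3) (v - u) →
        ∀ r : ℝ, 0 < r → r ≤ 1 / 2 →
          modCont (ball 0 1) u r ≤
            3 * modCont (ball 0 2) v (r ^ s) +
              A * (oscOn (ball 0 2) u + oscOn (ball 0 2) v) * r ^ (1 - s) :=
  stmt_3_general k s hs0 hs1
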